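/- Let n ≥ 2 and let C ∈ ℝ^{n×n} be a matrix of grid values on a uniform n×n grid with spacing h̃ = 1/(n−1), with discrete H¹ seminorm |||C|||²_∇ := Σ_{i,j≥2}(C_{i,j}−C_{i−1,j})² + Σ_{i,j≥2}(C_{i,j}−C_{i,j−1})². Let χ(C) be the continuous piecewise bilinear interpolant of these values on [0,1]². Then there is an absolute constant c > 0 with |χ(C)|²_{H¹([0,1]²)} ≥ c · |||C|||²_∇... equivalently |||C|||²_∇ ≤ C₀ |χ(C)|²_{H¹([0,1]²)} for an absolute constant C₀. -/

import Mathlib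

/-- Index of the grid cell containing `t` on the uniform grid of `[0,1]` with `n` nodes
(spacing `1/(n-1)`). -/
noncomputable def gridIdx (n : ℕ) (t : ℝ) : ℕ := min (⌊t * (n - 1 : ℕ)⌋₊) (n - 2)

/-- Continuous piecewise bilinear interpolant `χ(C)` of the grid values
`C : ℕ → ℕ → ℝ` on the uniform `n × n` tensor grid of `[0,1]²`. -/
noncomputable def bilinearInterp (n : ℕ) (C : ℕ → ℕ → ℝ) (x y : ℝ) : ℝ :=
  let i := gridIdx n x
  let j := gridIdx n y
  let s := x * (n - 1 : ℕ) - i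
  let t := y * (n - 1 : ℕ) - j
  (1 - s) * (1 - t) * C i j + s * (1 - t) * C (i + 1) j +
    (1 - s) * t * C i (j + 1) + s * t * C (i + 1) (j + 1)


/-! On a grid cell `χ(C)` is bilinear, so with `M = n - 1` its `x`-derivative is `M` times the
affine interpolation, in `y`, between the two horizontal differences `a, b` of the cell. The cell
has area `1 / M²`, so the cell contributes `(a² + ab + b²) / 3 ≥ (a² + b²) / 6` to `|χ(C)|²_{H¹}`.
Every horizontal difference is an edge of some cell, which gives the constant `6`; the vertical
differences are the horizontal ones of the transposed grid `swap C`. -/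

open MeasureTheory Set Function

theorem integral_sq_affine (a b : ℝ) :
    ∫ u in (0 : ℝ)..1, ((1 - u) * a + u * b) ^ 2 = (a ^ 2 + a * b + b ^ 2) / 3 := by
  have h : ∀ u : ℝ, ((1 - u) * a + u * b) ^ 2 = a ^ 2 + 2 * a * (b - a) * u + (b - a) ^ 2 * u ^ 2 :=
    fun u => by ring
  simp only [h]
  rw [intervalIntegral.integral_add (Continuous.intervalIntegrable (by fun_prop) _ _)
      (Continuous.intervalIntegrable (by fun_prop) _ _),
    intervalIntegral.integral_add intervalIntegrable_const
      (Continuous.intervalIntegrable (by fun_prop) _ _),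
    intervalIntegral.integral_const, intervalIntegral.integral_const_mul,
    intervalIntegral.integral_const_mul, integral_id, integral_pow]
  ring

def gridCell (M k : ℕ) : Set ℝ := Ioo (k / M) ((k + 1) / M)

theorem intervalIntegrable_and_integral_gridCell {M k : ℕ} (hM : 0 < M) {f g : ℝ → ℝ}
    (hg : Continuous g) (hfg : EqOn f (fun x => g (x * M - k)) (gridCell M k)) :
    IntervalIntegrable f volume (k / M) ((k + 1) / M) ∧
      ∫ x in (k / M : ℝ)..((k + 1) / M), f x = (M : ℝ)⁻¹ * ∫ u in (0 : ℝ)..1, g u := by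
  have hM' : (0 : ℝ) < M := Nat.cast_pos.2 hM
  have hle : (k / M : ℝ) ≤ (k + 1) / M := by gcongr; linarith
  have hfg' : EqOn f (fun x => g (x * M - k)) (uIoo (k / M : ℝ) ((k + 1) / M)) := by
    rwa [uIoo_of_le hle]
  refine ⟨(intervalIntegrable_congr_uIoo hfg').2 (Continuous.intervalIntegrable (by fun_prop) _ _),
    ?_⟩
  rw [intervalIntegral.integral_congr_uIoo hfg']
  simp_rw [mul_comm _ (M : ℝ)]
  rw [intervalIntegral.integral_comp_mul_sub (fun u => g u) hM'.ne', mul_div_cancel₀ _ hM'.ne',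
    mul_div_cancel₀ _ hM'.ne']
  simp

theorem integral_unitInterval_eq_sum_gridCell {M : ℕ} (hM : 0 < M) {f : ℝ → ℝ}
    {g : ℕ → ℝ → ℝ} (hg : ∀ k < M, Continuous (g k))
    (hfg : ∀ k < M, EqOn f (fun x => g k (x * M - k)) (gridCell M k)) :
    ∫ x in (0 : ℝ)..1, f x = (M : ℝ)⁻¹ * ∑ k ∈ Finset.range M, ∫ u in (0 : ℝ)..1, g k u := by
  have hcell := fun k (hk : k < M) =>
    intervalIntegrable_and_integral_gridCell hM (hg k hk) (hfg k hk)
  have hnode : ∀ k : ℕ, ((k + 1 : ℕ) : ℝ) / M = (k + 1) / M := fun k => by push_cast; rfl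
  have hsum := intervalIntegral.sum_integral_adjacent_intervals (a := fun k : ℕ => (k / M : ℝ))
    (μ := volume) (f := f) (n := M) fun k hk => hnode k ▸ (hcell k hk).1
  have hM' : (M : ℝ) ≠ 0 := Nat.cast_ne_zero.2 hM.ne'
  simp only [Nat.cast_zero, zero_div, div_self hM'] at hsum
  rw [← hsum, Finset.mul_sum]
  exact Finset.sum_congr rfl fun k hk => hnode k ▸ (hcell k (Finset.mem_range.1 hk)).2

theorem gridIdx_eq_of_mem_gridCell {n i : ℕ} (hi : i < n - 1) {x : ℝ}
    (hx : x ∈ gridCell (n - 1) i) : gridIdx n x = i := by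
  have hM : (0 : ℝ) < (n - 1 : ℕ) := Nat.cast_pos.2 (by omega)
  obtain ⟨h₁, h₂⟩ := hx
  rw [div_lt_iff₀ hM] at h₁
  rw [lt_div_iff₀ hM] at h₂
  have hfloor : ⌊x * (n - 1 : ℕ)⌋₊ = i :=
    (Nat.floor_eq_iff ((Nat.cast_nonneg i).trans h₁.le)).2 ⟨h₁.le, h₂⟩
  rw [gridIdx, hfloor]
  exact min_eq_left (by omega)

def cellSlope (C : ℕ → ℕ → ℝ) (i j : ℕ) (t : ℝ) : ℝ :=
  (1 - t) * (C (i + 1) j - C i j) + t * (C (i + 1) (j + 1) - C i (j + 1))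

def cellEnergy (C : ℕ → ℕ → ℝ) (i j : ℕ) : ℝ :=
  (C (i + 1) j - C i j) ^ 2 + (C (i + 1) j - C i j) * (C (i + 1) (j + 1) - C i (j + 1)) +
    (C (i + 1) (j + 1) - C i (j + 1)) ^ 2

@[fun_prop]
theorem continuous_cellSlope (C : ℕ → ℕ → ℝ) (i j : ℕ) : Continuous (cellSlope C i j) := by
  unfold cellSlope; fun_prop

theorem integral_cellSlope_sq (C : ℕ → ℕ → ℝ) (i j : ℕ) :
    ∫ t in (0 : ℝ)..1, cellSlope C i j t ^ 2 = cellEnergy C i j / 3 :=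
  integral_sq_affine _ _

theorem bilinearInterp_swap (n : ℕ) (C : ℕ → ℕ → ℝ) (x y : ℝ) :
    bilinearInterp n C x y = bilinearInterp n (swap C) y x := by
  simp only [bilinearInterp, swap]; ring

theorem deriv_bilinearInterp_fst {n i : ℕ} (hi : i < n - 1) (C : ℕ → ℕ → ℝ) (y : ℝ) {x : ℝ}
    (hx : x ∈ gridCell (n - 1) i) :
    deriv (fun x' => bilinearInterp n C x' y) x =
      (n - 1 : ℕ) * cellSlope C i (gridIdx n y) (y * (n - 1 : ℕ) - gridIdx n y) := by
  set j := gridIdx n y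
  set t := y * (n - 1 : ℕ) - j
  set a := ((n - 1 : ℕ) : ℝ) * cellSlope C i j t
  have hloc : EqOn (fun x' => bilinearInterp n C x' y)
      (fun x' => (1 - t) * C i j + t * C i (j + 1) - i * cellSlope C i j t + a * x')
      (gridCell (n - 1) i) := fun x' hx' => by
    simp only [bilinearInterp, gridIdx_eq_of_mem_gridCell hi hx', a, cellSlope]
    ring
  rw [(Filter.eventuallyEq_of_mem (isOpen_Ioo.mem_nhds hx) hloc).deriv_eq]
  exact (((hasDerivAt_id' x).const_mul a).const_add _).deriv.trans (mul_one a)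

theorem deriv_bilinearInterp_snd {n j : ℕ} (hj : j < n - 1) (C : ℕ → ℕ → ℝ) (x : ℝ) {y : ℝ}
    (hy : y ∈ gridCell (n - 1) j) :
    deriv (fun y' => bilinearInterp n C x y') y =
      (n - 1 : ℕ) * cellSlope (swap C) j (gridIdx n x) (x * (n - 1 : ℕ) - gridIdx n x) := by
  simp_rw [bilinearInterp_swap n C x]
  exact deriv_bilinearInterp_fst hj (swap C) x hy

theorem integral_gradSq_bilinearInterp_of_mem_gridCell {n j : ℕ} (hj : j < n - 1)
    (C : ℕ → ℕ → ℝ) {y : ℝ} (hy : y ∈ gridCell (n - 1) j) :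
    ∫ x in (0 : ℝ)..1, ((deriv (fun x' => bilinearInterp n C x' y) x) ^ 2 +
        (deriv (fun y' => bilinearInterp n C x y') y) ^ 2) =
      (n - 1 : ℕ) * ∑ i ∈ Finset.range (n - 1),
        (cellSlope C i j (y * (n - 1 : ℕ) - j) ^ 2 + cellEnergy (swap C) j i / 3) := by
  set M := ((n - 1 : ℕ) : ℝ)
  have hM : M ≠ 0 := Nat.cast_ne_zero.2 (by omega)
  set t := y * M - j
  rw [integral_unitInterval_eq_sum_gridCell (M := n - 1) (by omega)
    (g := fun i u => (M * cellSlope C i j t) ^ 2 + (M * cellSlope (swap C) j i u) ^ 2)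
    (fun i _ => continuous_const.add (((continuous_cellSlope _ _ _).const_mul M).pow 2))
    (fun i hi x hx => by
      simp only [deriv_bilinearInterp_fst hi C y hx, deriv_bilinearInterp_snd hj C x hy,
        gridIdx_eq_of_mem_gridCell hi hx, gridIdx_eq_of_mem_gridCell hj hy, t, M])]
  rw [Finset.mul_sum, Finset.mul_sum]
  refine Finset.sum_congr rfl fun i _ => ?_
  simp_rw [mul_pow]
  rw [intervalIntegral.integral_add intervalIntegrable_const
      (Continuous.intervalIntegrable (by fun_prop) _ _)]
  simp only [intervalIntegral.integral_const_mul, intervalIntegral.integral_const,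
    integral_cellSlope_sq, M]
  field_simp
  ring

theorem integral_integral_gradSq_bilinearInterp {n : ℕ} (hn : 2 ≤ n) (C : ℕ → ℕ → ℝ) :
    ∫ y in (0 : ℝ)..1, ∫ x in (0 : ℝ)..1, ((deriv (fun x' => bilinearInterp n C x' y) x) ^ 2 +
        (deriv (fun y' => bilinearInterp n C x y') y) ^ 2) =
      (∑ i ∈ Finset.range (n - 1), ∑ j ∈ Finset.range (n - 1), cellEnergy C i j +
        ∑ j ∈ Finset.range (n - 1), ∑ i ∈ Finset.range (n - 1), cellEnergy (swap C) j i) / 3 := by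
  set M := ((n - 1 : ℕ) : ℝ)
  have hM : M ≠ 0 := Nat.cast_ne_zero.2 (by omega)
  rw [integral_unitInterval_eq_sum_gridCell (M := n - 1) (by omega)
    (g := fun j u => M * ∑ i ∈ Finset.range (n - 1),
      (cellSlope C i j u ^ 2 + cellEnergy (swap C) j i / 3))
    (fun j _ => by fun_prop)
    (fun j hj y hy => integral_gradSq_bilinearInterp_of_mem_gridCell hj C hy)]
  simp only [intervalIntegral.integral_const_mul]
  rw [Finset.sum_comm (f := fun i j => cellEnergy C i j), ← Finset.sum_add_distrib,
    Finset.sum_div, Finset.mul_sum]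
  refine Finset.sum_congr rfl fun j _ => ?_
  rw [intervalIntegral.integral_finsetSum
      fun i _ => Continuous.intervalIntegrable (by fun_prop) _ _,
    ← Finset.sum_add_distrib, Finset.sum_div, Finset.mul_sum, Finset.mul_sum]
  refine Finset.sum_congr rfl fun i _ => ?_
  rw [intervalIntegral.integral_add (Continuous.intervalIntegrable (by fun_prop) _ _)
    intervalIntegrable_const, integral_cellSlope_sq, intervalIntegral.integral_const,
    inv_mul_cancel_left₀ hM, sub_zero, one_smul, add_div]

theorem sum_range_succ_le_sum_add_succ {v : ℕ → ℝ} (hv : ∀ k, 0 ≤ v k) {m : ℕ} (hm : 0 < m) :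
    ∑ k ∈ Finset.range (m + 1), v k ≤ ∑ k ∈ Finset.range m, (v k + v (k + 1)) := by
  obtain ⟨m, rfl⟩ : ∃ m', m = m' + 1 := ⟨m - 1, by omega⟩
  rw [Finset.sum_add_distrib, Finset.sum_range_succ _ (m + 1),
    Finset.sum_range_succ (fun k => v (k + 1))]
  have := Finset.sum_nonneg fun k (_ : k ∈ Finset.range m) => hv (k + 1)
  linarith

theorem sq_add_sq_le_two_mul_cellEnergy (C : ℕ → ℕ → ℝ) (i j : ℕ) :
    (C (i + 1) j - C i j) ^ 2 + (C (i + 1) (j + 1) - C i (j + 1)) ^ 2 ≤ 2 * cellEnergy C i j := by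
  unfold cellEnergy
  nlinarith [sq_nonneg (C (i + 1) j - C i j + (C (i + 1) (j + 1) - C i (j + 1)))]

theorem sum_sq_sub_le_two_mul_sum_cellEnergy (C : ℕ → ℕ → ℝ) (p : ℕ) {q : ℕ} (hq : 0 < q) :
    ∑ i ∈ Finset.range p, ∑ j ∈ Finset.range (q + 1), (C (i + 1) j - C i j) ^ 2 ≤
      2 * ∑ i ∈ Finset.range p, ∑ j ∈ Finset.range q, cellEnergy C i j := by
  simp only [Finset.mul_sum]
  refine Finset.sum_le_sum fun i _ => ?_
  calc ∑ j ∈ Finset.range (q + 1), (C (i + 1) j - C i j) ^ 2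
      ≤ ∑ j ∈ Finset.range q, ((C (i + 1) j - C i j) ^ 2 + (C (i + 1) (j + 1) - C i (j + 1)) ^ 2) :=
        sum_range_succ_le_sum_add_succ (fun _ => sq_nonneg _) hq
    _ ≤ ∑ j ∈ Finset.range q, 2 * cellEnergy C i j :=
        Finset.sum_le_sum fun j _ => sq_add_sq_le_two_mul_cellEnergy C i j

/-- Two-dimensional discrete–continuous seminorm equivalence: the discrete `H¹`
seminorm `|||C|||²_∇` of grid values is bounded by an absolute constant times the
`H¹([0,1]²)` seminorm of the bilinear interpolant `χ(C)`. -/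
theorem discrete_seminorm_le_bilinear_H1 :
    ∃ C₀ : ℝ, 0 < C₀ ∧ ∀ n : ℕ, 2 ≤ n → ∀ C : ℕ → ℕ → ℝ,
      (∑ i ∈ Finset.range (n - 1), ∑ j ∈ Finset.range n, (C (i + 1) j - C i j) ^ 2) +
        (∑ i ∈ Finset.range n, ∑ j ∈ Finset.range (n - 1), (C i (j + 1) - C i j) ^ 2) ≤
      C₀ * ∫ y in (0:ℝ)..1, ∫ x in (0:ℝ)..1,
        ((deriv (fun x' => bilinearInterp n C x' y) x) ^ 2 +
          (deriv (fun y' => bilinearInterp n C x y') y) ^ 2) := by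
  refine ⟨6, by norm_num, fun n hn C => ?_⟩
  have hrange : Finset.range n = Finset.range (n - 1 + 1) := by congr 1; omega
  have hhoriz := sum_sq_sub_le_two_mul_sum_cellEnergy C (n - 1) (q := n - 1) (by omega)
  have hvert := sum_sq_sub_le_two_mul_sum_cellEnergy (swap C) (n - 1) (q := n - 1) (by omega)
  rw [integral_integral_gradSq_bilinearInterp hn C, Finset.sum_comm (s := Finset.range n), hrange]
  linarith
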